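/- Let H = ∗_{a∈A} H_a be a nontrivial free product and let w_1, w_2 ∈ H be cyclically reduced words with |w_1|_c ≥ 2 and |w_2|_c ≥ 2. If a word U is a subword both of w_1^{k_1} and of w_2^{k_2} for some positive integers k_1, k_2, and |U| ≥ |w_1|_r + |w_2|_r − gcd(|w_1|_r, |w_2|_r), then there exist reduced words C_1, C_2 ∈ H such that w_1 ≡ (C_1 · C_2)^{m_1} and w_2 ≡ (C_2 · C_1)^{m_2} for some positive integers m_1, m_2. -/

import Mathlib

/-!
Common definitions: we model a nontrivial free product `H = ∗_{a ∈ A} H_a` as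
`Monoid.CoprodI G` for a family of groups `G : ι → Type*` with `[Nontrivial ι]`
(the index set has at least two elements) and `∀ i, Nontrivial (G i)`
(all factors are nontrivial groups).
-/

namespace FreeProdPaper

open Monoid

variable {ι : Type*} {G : ι → Type*} [∀ i, Group (G i)]

/-- An element of a free product is *hyperbolic* if it lies in no conjugate
`g⁻¹ H_a g` of a factor. -/
def IsHyperbolic (w : CoprodI G) : Prop :=
  ∀ (i : ι) (g : CoprodI G) (x : G i), w ≠ g⁻¹ * CoprodI.of x * g

/-- The reduced form (as the list of its syllables) of an element of a free product. -/
noncomputable def redList (w : CoprodI G) : List (Σ i, G i) :=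
  letI := Classical.decEq ι
  letI : ∀ i, DecidableEq (G i) := fun _ => Classical.decEq _
  (CoprodI.Word.equiv w).toList

/-- The (syllable) length `|w|` of an element of a free product:
the number of syllables of its reduced form. -/
noncomputable def len (w : CoprodI G) : ℕ := (redList w).length

/-- The cyclic length `|w|_c`: the length of a cyclically reduced word conjugate
to `w`, equivalently the minimal length of a conjugate of `w`. -/
noncomputable def cyclicLength (w : CoprodI G) : ℕ :=
  sInf (Set.range fun g : CoprodI G => len (g⁻¹ * w * g))

/-- A word is cyclically reduced iff it is nontrivial and has minimal length in
its conjugacy class (for a reduced word of length `≥ 2` this says exactly that its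
first and last syllables lie in distinct factors). -/
def IsCyclicallyReduced (w : CoprodI G) : Prop :=
  w ≠ 1 ∧ len w = cyclicLength w

/-- `w` is a proper power: `w = h ^ n` for some `h` and some `n ≥ 2`. -/
def IsProperPower (w : CoprodI G) : Prop :=
  ∃ (h : CoprodI G) (n : ℕ), 2 ≤ n ∧ w = h ^ n

/-- A *simple* word: a cyclically reduced word of length at least two that is not
a proper power. -/
def IsSimple (w : CoprodI G) : Prop :=
  IsCyclicallyReduced w ∧ 2 ≤ len w ∧ ¬ IsProperPower w

/-- The radical length `|w|_r` of a hyperbolic element `w = f⁻¹ ⬝ A^k ∘ f`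
(`A` simple, `f` reduced, `k ≥ 1`) is `|A|`; equivalently, it is the least cyclic
length of a root of `w`. -/
noncomputable def radicalLength (w : CoprodI G) : ℕ :=
  sInf {n | ∃ (h : CoprodI G) (k : ℕ), 0 < k ∧ w = h ^ k ∧ n = cyclicLength h}

/-- `u` is a *subword* of `w`: the reduced form of `w` is `f₁ ⬝ u ⬝ f₂`,
i.e. the reduced form of `u` occurs as a contiguous sublist of the reduced form
of `w`. -/
def IsSubword (u w : CoprodI G) : Prop :=
  ∃ l₁ l₂ : List (Σ i, G i), redList w = l₁ ++ redList u ++ l₂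

/-- One step of bringing a list of syllables to reduced form which does not affect
the first or the last syllable of the word: two adjacent syllables from the same
factor, not including the first or the last syllable of the word, are merged
(or cancelled, if their product is trivial). -/
def InnerStep (L L' : List (Σ i, G i)) : Prop :=
  ∃ (l₁ l₂ : List (Σ i, G i)) (i : ι) (a b : G i),
    l₁ ≠ [] ∧ l₂ ≠ [] ∧
    L = l₁ ++ ⟨i, a⟩ :: ⟨i, b⟩ :: l₂ ∧
    ((a * b = 1 ∧ L' = l₁ ++ l₂) ∨ (a * b ≠ 1 ∧ L' = l₁ ++ ⟨i, a * b⟩ :: l₂))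

/-- `EndsUnaffected L w` : the concatenation `L` of syllables (of reduced words
whose product is `w`) can be brought to the reduced form of `w` by cancellations
and mergings none of which affects the first or the last syllable. -/
def EndsUnaffected (L : List (Σ i, G i)) (w : CoprodI G) : Prop :=
  Relation.ReflTransGen InnerStep L (redList w)

/-- The commutator as used in the paper: `[x, y] = x⁻¹ y⁻¹ x y`. -/
def pcomm {H : Type*} [Group H] (x y : H) : H := x⁻¹ * y⁻¹ * x * y

/-- The word `L₂(z₀, z₁)` from the paper. -/
def L2 {H : Type*} [Group H] (x y : H) : H :=
  pcomm (x ^ 10) (y ^ 10) ^ 5000 * x * pcomm (x ^ 10) (y ^ 10) ^ 200 * y *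
    pcomm (x ^ 10) (y ^ 10) ^ 400 * x⁻¹ * pcomm (x ^ 10) (y ^ 10) ^ 600 * y⁻¹ *
    pcomm (x ^ 10) (y ^ 10) ^ 5000

/-- The words `E_{k̲[j,0]}`: `Ew k y j` is `E_{k̲[j+1,0]}(y₀, …, y_j)`, defined by
`E_{k̲[1,0]}(z₀) = z₀^{k₀}` and
`E_{k̲[j,0]}(z₀,…,z_{j-1}) = [E_{k̲[j-1,0]}(z₀,…,z_{j-2})², z_{j-1}^{2 k_{j-1}}]`. -/
def Ew {H : Type*} [Group H] (k : ℕ → ℕ) (y : ℕ → H) : ℕ → H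
  | 0 => y 0 ^ k 0
  | j + 1 => pcomm (Ew k y j ^ 2) (y (j + 1) ^ (2 * k (j + 1)))

/-- The words `E_n`: `En y j` is `E_{j+1}(y₀, …, y_j)`, defined by
`E₂(z₀, z₁) = [z₀², z₁²]` and `E_n(z₀,…,z_{n-1}) = [E_{n-1}(z₀,…,z_{n-2})², z_{n-1}²]`. -/
def En {H : Type*} [Group H] (y : ℕ → H) : ℕ → H
  | 0 => y 0
  | j + 1 => pcomm (En y j ^ 2) (y (j + 1) ^ 2)

/-- A subgroup `K` of `Γ` is *verbally closed* if every equation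
`w(x₁,…,xₙ) = h` (with `w` in the free group and `h ∈ K`) having a solution
in `Γ` also has a solution in `K`. -/
def IsVerballyClosed {Γ : Type*} [Group Γ] (K : Subgroup Γ) : Prop :=
  ∀ (n : ℕ) (w : FreeGroup (Fin n)) (h : Γ), h ∈ K →
    (∃ x : Fin n → Γ, FreeGroup.lift x w = h) →
    ∃ y : Fin n → Γ, (∀ i, y i ∈ K) ∧ FreeGroup.lift y w = h

/-- A subgroup `K` of `Γ` is *algebraically closed in `Γ`* if every finite system
of equations `w_j(x₁,…,xₙ, K) = 1` with coefficients in `K` (i.e. `w_j` lies in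
the free product of the free group `F_n` and `K`) having a solution in `Γ`
also has a solution in `K`. -/
def IsAlgebraicallyClosedIn {Γ : Type*} [Group Γ] (K : Subgroup Γ) : Prop :=
  ∀ (n m : ℕ) (w : Fin m → Monoid.Coprod (FreeGroup (Fin n)) K),
    (∃ x : Fin n → Γ, ∀ j, Monoid.Coprod.lift (FreeGroup.lift x) K.subtype (w j) = 1) →
    ∃ y : Fin n → Γ, (∀ i, y i ∈ K) ∧
      ∀ j, Monoid.Coprod.lift (FreeGroup.lift y) K.subtype (w j) = 1

end FreeProdPaper

/-!
Write `n = |w|` and `r = |w|_r` for a cyclically reduced `w` with `|w|_c ≥ 2`. Some conjugate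
`g⁻¹ w g` is a power `h^k` of a cyclically reduced root with `|h| = r`. Conjugation by `g` alters
only boundedly many syllables at the two ends, so the reduced forms of high powers of `w` and of
`h` share an infix of length at least `n + r`. By the periodicity lemma (Fine–Wilf) the reduced
forms of `w` and `h` are then powers of two rotations of one word of length `gcd(n, r)`, and
minimality of the root forces `gcd(n, r) = r`. So `w₁`, `w₂` are powers of words `D₁`, `D₂` of
lengths `|w₁|_r`, `|w₂|_r`, and `U` is a common infix of powers of `D₁` and `D₂`; Fine–Wilf once
more gives `D₁ = (C₁C₂)^a` and `D₂ = (C₂C₁)^b`.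
-/

namespace List

variable {α : Type*}

@[simp]
theorem length_flatten_replicate (a : ℕ) (l : List α) :
    (replicate a l).flatten.length = a * l.length := by
  simp

theorem flatten_replicate_flatten_replicate (k m : ℕ) (l : List α) :
    (replicate k (replicate m l).flatten).flatten = (replicate (k * m) l).flatten := by
  rw [← map_replicate, ← flatten_flatten, flatten_replicate_replicate]

theorem getElem?_flatten_replicate {l : List α} {a i : ℕ} (h : i < a * l.length) :
    (replicate a l).flatten[i]? = l[i % l.length]? := by
  induction a generalizing i with
  | zero => omega
  | succ a ih =>
    rw [replicate_succ, flatten_cons]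
    rcases lt_or_ge i l.length with hi | hi
    · rw [getElem?_append_left hi, Nat.mod_eq_of_lt hi]
    · rw [getElem?_append_right hi, ih (by rw [Nat.succ_mul] at h; omega), Nat.mod_eq_sub_mod hi]

theorem hasPeriod_flatten_replicate (a : ℕ) (l : List α) :
    (replicate a l).flatten.HasPeriod l.length := by
  rw [hasPeriod_iff_forall_getElem?_mod]
  intro i hi
  rw [length_flatten_replicate] at hi
  rw [getElem?_flatten_replicate hi, getElem?_flatten_replicate ((Nat.mod_le _ _).trans_lt hi),
    Nat.mod_mod]

theorem rotate_flatten_replicate (m n : ℕ) (l : List α) :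
    (replicate m l).flatten.rotate n = (replicate m (l.rotate n)).flatten := by
  apply ext_getElem?
  intro i
  rcases lt_or_ge i (m * l.length) with hi | hi
  · have hl : 0 < l.length := Nat.pos_of_mul_pos_left (Nat.zero_lt_of_lt hi)
    have hmod : (i + n) % (m * l.length) < m * l.length := Nat.mod_lt _ (Nat.zero_lt_of_lt hi)
    rw [getElem?_rotate (by rwa [length_flatten_replicate]), length_flatten_replicate,
      getElem?_flatten_replicate hmod, getElem?_flatten_replicate (by rwa [length_rotate]),
      length_rotate, getElem?_rotate (Nat.mod_lt _ hl), Nat.mod_mod_of_dvd _ (Dvd.intro_left m rfl),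
      Nat.mod_add_mod]
  · rw [getElem?_eq_none (by simpa using hi), getElem?_eq_none (by simpa using hi)]

theorem IsInfix.take_isRotated {u l : List α} {a : ℕ} (h : u <:+: (replicate a l).flatten)
    (hl : l.length ≤ u.length) : u.take l.length ~r l := by
  obtain ⟨s, t, hst⟩ := h
  have hlen : s.length + u.length ≤ a * l.length := by
    rw [← length_flatten_replicate, ← hst, length_append, length_append]
    omega
  suffices u.take l.length = l.rotate s.length from this ▸ IsRotated.forall l _
  apply ext_getElem?
  intro i
  rcases lt_or_ge i l.length with hi | hi
  · rw [getElem?_rotate hi, getElem?_take_of_lt hi,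
      ← getElem?_flatten_replicate (a := a) (by omega), ← hst, append_assoc,
      getElem?_append_right (by omega), getElem?_append_left (by omega)]
    congr 1
    omega
  · rw [getElem?_eq_none (by simp [hi]), getElem?_eq_none (by simpa using hi)]

theorem HasPeriod.eq_flatten_replicate_take {l : List α} {p : ℕ} (h : l.HasPeriod p)
    (hp : p ∣ l.length) : l = (replicate (l.length / p) (l.take p)).flatten := by
  rcases Nat.eq_zero_or_pos l.length with hl | hl
  · simp [length_eq_zero_iff.mp hl]
  have hp0 : 0 < p := Nat.pos_of_dvd_of_pos hp hl
  have htake : (l.take p).length = p := by simp [Nat.le_of_dvd hl hp]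
  apply ext_getElem?
  intro i
  rcases lt_or_ge i l.length with hi | hi
  · rw [getElem?_flatten_replicate (by rwa [htake, Nat.div_mul_cancel hp]), htake,
      getElem?_take_of_lt (Nat.mod_lt _ hp0), ← hasPeriod_iff_forall_getElem?_mod.mp h i hi]
  · rw [getElem?_eq_none hi, getElem?_eq_none (by rwa [length_flatten_replicate, htake,
      Nat.div_mul_cancel hp])]

theorem HasPeriod.exists_eq_flatten_replicate_rotate {U X : List α} {g c : ℕ}
    (hU : U.HasPeriod g) (hX : U <:+: (replicate c X).flatten) (hX₀ : X ≠ [])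
    (hg : g ∣ X.length) (hXU : X.length ≤ U.length) :
    ∃ n, X = (replicate (X.length / g) ((U.take g).rotate n)).flatten := by
  obtain ⟨n, hn⟩ := hX.take_isRotated hXU
  have hper : (U.take X.length).HasPeriod g := hU.infix (take_prefix _ _).isInfix
  have hlen : (U.take X.length).length = X.length := by simp [hXU]
  refine ⟨n, ?_⟩
  conv_lhs => rw [← hn, hper.eq_flatten_replicate_take (by rwa [hlen]), rotate_flatten_replicate,
    hlen, take_take, min_eq_left (Nat.le_of_dvd (length_pos_iff.mpr hX₀) hg)]

theorem exists_eq_flatten_replicate_of_infix {S T U : List α} {a b : ℕ} (hS₀ : S ≠ [])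
    (hT₀ : T ≠ []) (hS : U <:+: (replicate a S).flatten) (hT : U <:+: (replicate b T).flatten)
    (hU : S.length + T.length - S.length.gcd T.length ≤ U.length) :
    ∃ C₁ C₂ : List α, (C₁ ++ C₂).length = S.length.gcd T.length ∧
      S = (replicate (S.length / S.length.gcd T.length) (C₁ ++ C₂)).flatten ∧
      T = (replicate (T.length / S.length.gcd T.length) (C₂ ++ C₁)).flatten := by
  set g := S.length.gcd T.length
  have hper : U.HasPeriod g :=
    ((hasPeriod_flatten_replicate a S).infix hS).gcd
      ((hasPeriod_flatten_replicate b T).infix hT) hU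
  have hgS := Nat.gcd_le_left T.length (length_pos_iff.mpr hS₀)
  have hgT := Nat.gcd_le_right (m := S.length) (length_pos_iff.mpr hT₀)
  obtain ⟨n₁, hS'⟩ :=
    hper.exists_eq_flatten_replicate_rotate hS hS₀ (Nat.gcd_dvd_left _ _) (by omega)
  obtain ⟨n₂, hT'⟩ :=
    hper.exists_eq_flatten_replicate_rotate hT hT₀ (Nat.gcd_dvd_right _ _) (by omega)
  set E := (U.take g).rotate n₁
  obtain ⟨δ, hδ⟩ : E ~r (U.take g).rotate n₂ :=
    (IsRotated.forall _ n₁).trans (IsRotated.forall _ n₂).symm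
  refine ⟨E.take (δ % E.length), E.drop (δ % E.length), ?_, ?_, ?_⟩
  · simp only [take_append_drop, E, length_rotate, length_take]
    omega
  · rwa [take_append_drop]
  · rwa [← rotate_eq_drop_append_take_mod, hδ]

end List

namespace FreeProdPaper

open Monoid List

variable {ι : Type*} {G : ι → Type*} [∀ i, Group (G i)]

def IsReducedWord (L : List (Σ i, G i)) : Prop :=
  L.IsChain (fun a b => a.1 ≠ b.1) ∧ ∀ x ∈ L, x.2 ≠ 1

/-- For nonempty `L` this says that `L ++ L` is reduced; unlike `IsCyclicallyReduced`, it fails for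
one-syllable words. -/
def IsCyclicallyReducedWord (L : List (Σ i, G i)) : Prop :=
  IsReducedWord L ∧ ∀ a ∈ L.getLast?, ∀ b ∈ L.head?, a.1 ≠ b.1

noncomputable def listProd (L : List (Σ i, G i)) : CoprodI G :=
  (L.map fun x => CoprodI.of x.2).prod

@[simp]
theorem listProd_nil : listProd ([] : List (Σ i, G i)) = 1 := rfl

@[simp]
theorem listProd_cons (x : Σ i, G i) (L : List (Σ i, G i)) :
    listProd (x :: L) = CoprodI.of x.2 * listProd L := by
  simp [listProd]

@[simp]
theorem listProd_append (L L' : List (Σ i, G i)) :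
    listProd (L ++ L') = listProd L * listProd L' := by
  simp [listProd]

theorem listProd_flatten_replicate (n : ℕ) (L : List (Σ i, G i)) :
    listProd (replicate n L).flatten = listProd L ^ n := by
  simp [listProd, List.prod_flatten, List.prod_replicate]

theorem isReducedWord_cons {x : Σ i, G i} {L : List (Σ i, G i)} :
    IsReducedWord (x :: L) ↔
      x.2 ≠ 1 ∧ (∀ y ∈ L.head?, x.1 ≠ y.1) ∧ IsReducedWord L := by
  simp only [IsReducedWord, isChain_cons, mem_cons, forall_eq_or_imp]
  tauto

theorem IsReducedWord.infix {L L' : List (Σ i, G i)} (h : IsReducedWord L) (hL' : L' <:+: L) :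
    IsReducedWord L' :=
  ⟨h.1.infix hL', fun x hx => h.2 x (hL'.subset hx)⟩

theorem isReducedWord_redList (w : CoprodI G) : IsReducedWord (redList w) :=
  letI := Classical.decEq ι
  letI : ∀ i, DecidableEq (G i) := fun _ => Classical.decEq _
  ⟨(CoprodI.Word.equiv w).chain_ne, (CoprodI.Word.equiv w).ne_one⟩

@[simp]
theorem listProd_redList (w : CoprodI G) : listProd (redList w) = w :=
  letI := Classical.decEq ι
  letI : ∀ i, DecidableEq (G i) := fun _ => Classical.decEq _
  CoprodI.Word.equiv.left_inv w

theorem redList_listProd {L : List (Σ i, G i)} (h : IsReducedWord L) :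
    redList (listProd L) = L :=
  letI := Classical.decEq ι
  letI : ∀ i, DecidableEq (G i) := fun _ => Classical.decEq _
  congrArg CoprodI.Word.toList (CoprodI.Word.equiv.right_inv ⟨L, h.2, h.1⟩)

theorem redList_eq_nil_iff {w : CoprodI G} : redList w = [] ↔ w = 1 := by
  refine ⟨fun h => by rw [← listProd_redList w, h, listProd_nil], ?_⟩
  rintro rfl
  exact redList_listProd (L := []) ⟨isChain_nil, by simp⟩

@[simp]
theorem redList_one : redList (1 : CoprodI G) = [] :=
  redList_eq_nil_iff.mpr rfl

theorem redList_of {i : ι} {x : G i} (hx : x ≠ 1) : redList (CoprodI.of x) = [⟨i, x⟩] := by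
  simpa using redList_listProd (L := [⟨i, x⟩]) ⟨isChain_singleton _, by simpa⟩

theorem redList_inv (w : CoprodI G) :
    redList w⁻¹ = ((redList w).map fun x => ⟨x.1, x.2⁻¹⟩).reverse := by
  have hred := isReducedWord_redList w
  have hprod :
      listProd ((redList w).map fun x => (⟨x.1, x.2⁻¹⟩ : Σ i, G i)).reverse = w⁻¹ := by
    conv_rhs => rw [← listProd_redList w]
    simp [listProd, List.prod_inv_reverse, Function.comp_def]
  rw [← hprod, redList_listProd]
  refine ⟨?_, fun x hx => ?_⟩
  · rw [isChain_reverse, isChain_map]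
    exact hred.1.imp fun _ _ h => Ne.symm h
  · obtain ⟨y, hy, rfl⟩ := mem_map.mp (mem_reverse.mp hx)
    exact inv_ne_one.mpr (hred.2 y hy)

theorem len_inv (w : CoprodI G) : len w⁻¹ = len w := by
  simp [len, redList_inv]

theorem exists_redList_of_mul {i : ι} (x : G i) (u : CoprodI G) :
    ∃ l d, l.length ≤ 1 ∧ d ≤ 1 ∧
      redList (CoprodI.of x * u) = l ++ (redList u).drop d := by
  by_cases hx : x = 1
  · exact ⟨[], 0, by simp, by simp, by simp [hx]⟩
  rcases hu : redList u with _ | ⟨⟨j, y⟩, M⟩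
  · refine ⟨[⟨i, x⟩], 0, by simp, by simp, ?_⟩
    rw [redList_eq_nil_iff.mp hu, mul_one, redList_of hx, drop_zero, append_nil]
  have hred := hu ▸ isReducedWord_redList u
  rw [isReducedWord_cons] at hred
  have hu' : u = CoprodI.of y * listProd M := by rw [← listProd_redList u, hu, listProd_cons]
  by_cases hij : i = j
  · subst hij
    have hxu : CoprodI.of x * u = CoprodI.of (x * y) * listProd M := by
      rw [hu', map_mul, mul_assoc]
    by_cases hxy : x * y = 1
    · refine ⟨[], 1, by simp, le_rfl, ?_⟩
      rw [hxu, hxy, map_one, one_mul, redList_listProd hred.2.2]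
      rfl
    · refine ⟨[⟨i, x * y⟩], 1, by simp, le_rfl, ?_⟩
      rw [hxu, ← listProd_cons ⟨i, x * y⟩ M,
        redList_listProd ((isReducedWord_cons (x := ⟨i, x * y⟩)).mpr ⟨hxy, hred.2⟩)]
      rfl
  · refine ⟨[⟨i, x⟩], 0, by simp, zero_le_one, ?_⟩
    rw [hu', ← listProd_cons ⟨j, y⟩, ← listProd_cons ⟨i, x⟩, redList_listProd]
    · rfl
    · exact isReducedWord_cons.mpr ⟨hx, by simpa using hij, isReducedWord_cons.mpr hred⟩

theorem len_of_mul_le {i : ι} (x : G i) (u : CoprodI G) :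
    len (CoprodI.of x * u) ≤ len u + 1 := by
  obtain ⟨l, d, hl, -, h⟩ := exists_redList_of_mul x u
  rw [len, h, length_append, length_drop]
  exact (Nat.add_le_add hl (Nat.sub_le _ _)).trans_eq (Nat.add_comm _ _)

theorem len_listProd_le (L : List (Σ i, G i)) : len (listProd L) ≤ L.length := by
  induction L with
  | nil => simp [len]
  | cons x L ih =>
    rw [listProd_cons, length_cons]
    exact (len_of_mul_le _ _).trans (Nat.add_le_add_right ih 1)

theorem exists_redList_listProd_mul (L : List (Σ i, G i)) (u : CoprodI G) :
    ∃ l d, d ≤ L.length ∧ redList (listProd L * u) = l ++ (redList u).drop d := by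
  induction L with
  | nil => exact ⟨[], 0, le_rfl, by simp⟩
  | cons x L ih =>
    obtain ⟨l, d, hd, h⟩ := ih
    obtain ⟨l₀, d₀, -, hd₀, h₀⟩ := exists_redList_of_mul x.2 (listProd L * u)
    refine ⟨l₀ ++ l.drop d₀, d + (d₀ - l.length), by simp; omega, ?_⟩
    rw [listProd_cons, mul_assoc, h₀, h, drop_append, drop_drop, append_assoc]

theorem exists_redList_mul_eq_append_drop (a u : CoprodI G) :
    ∃ l d, d ≤ len a ∧ redList (a * u) = l ++ (redList u).drop d := by
  obtain ⟨l, d, hd, h⟩ := exists_redList_listProd_mul (redList a) u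
  exact ⟨l, d, hd, by rwa [listProd_redList] at h⟩

theorem exists_redList_mul_eq_take_append (u a : CoprodI G) :
    ∃ l m, len u ≤ m + len a ∧ redList (u * a) = (redList u).take m ++ l := by
  obtain ⟨l, d, hd, h⟩ := exists_redList_mul_eq_append_drop a⁻¹ u⁻¹
  rw [len_inv] at hd
  refine ⟨(l.map fun x => ⟨x.1, x.2⁻¹⟩).reverse, len u - d, by omega, ?_⟩
  rw [← inv_inv (u * a), mul_inv_rev, redList_inv, h, redList_inv]
  simp [drop_reverse, len, Function.comp_def]

theorem exists_infix_redList_mul_mul (a v b : CoprodI G) :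
    ∃ F, F <:+: redList (a * v * b) ∧ F <:+: redList v ∧
      len v ≤ F.length + len a + len b := by
  obtain ⟨l, m, hm, hvb⟩ := exists_redList_mul_eq_take_append v b
  obtain ⟨l', d, hd, havb⟩ := exists_redList_mul_eq_append_drop a (v * b)
  refine ⟨((redList v).take m).drop d, ?_,
    (drop_suffix _ _).isInfix.trans (take_prefix _ _).isInfix, ?_⟩
  · rw [mul_assoc, havb, hvb, drop_append]
    exact ⟨l', _, by rw [append_assoc]⟩
  · simp only [len, length_drop, length_take] at hm hd ⊢
    omega

theorem redList_pow {w : CoprodI G} (hw : IsCyclicallyReducedWord (redList w)) (n : ℕ) :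
    redList (w ^ n) = (replicate n (redList w)).flatten := by
  rcases n.eq_zero_or_pos with rfl | hn
  · simp
  rw [← redList_listProd (L := (replicate n (redList w)).flatten), listProd_flatten_replicate,
    listProd_redList]
  rcases eq_or_ne (redList w) [] with h | h
  · simp [h, IsReducedWord]
  refine ⟨(isChain_flatten (by simp [h.symm])).mpr ⟨?_, isChain_replicate_of_rel _ ?_⟩, ?_⟩
  · simpa using fun _ => hw.1.1
  · intro x hx y hy
    exact hw.2 x (by simpa [hn.ne'] using hx) y (by simpa [hn.ne'] using hy)
  · intro x hx
    simp only [mem_flatten, mem_replicate] at hx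
    obtain ⟨_, ⟨-, rfl⟩, hx⟩ := hx
    exact hw.1.2 x hx

theorem cyclicLength_le (w g : CoprodI G) : cyclicLength w ≤ len (g⁻¹ * w * g) :=
  Nat.sInf_le ⟨g, rfl⟩

theorem exists_len_eq_cyclicLength (w : CoprodI G) : ∃ g, len (g⁻¹ * w * g) = cyclicLength w :=
  Nat.sInf_mem (Set.range_nonempty _)

theorem cyclicLength_conj (w a : CoprodI G) : cyclicLength (a⁻¹ * w * a) = cyclicLength w := by
  refine le_antisymm ?_ ?_
  · obtain ⟨g, hg⟩ := exists_len_eq_cyclicLength w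
    have := cyclicLength_le (a⁻¹ * w * a) (a⁻¹ * g)
    rwa [show (a⁻¹ * g)⁻¹ * (a⁻¹ * w * a) * (a⁻¹ * g) = g⁻¹ * w * g by group, hg]
      at this
  · obtain ⟨g, hg⟩ := exists_len_eq_cyclicLength (a⁻¹ * w * a)
    have := cyclicLength_le w (a * g)
    rwa [show (a * g)⁻¹ * w * (a * g) = g⁻¹ * (a⁻¹ * w * a) * g by group, hg] at this

theorem IsCyclicallyReduced.isCyclicallyReducedWord {w : CoprodI G} (hw : IsCyclicallyReduced w)
    (h2 : 2 ≤ len w) : IsCyclicallyReducedWord (redList w) := by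
  refine ⟨isReducedWord_redList w, ?_⟩
  rintro ⟨i, x⟩ hx ⟨j, y⟩ hy (rfl : i = j)
  obtain ⟨M, hM⟩ : ∃ M, redList w = ⟨i, y⟩ :: M ++ [⟨i, x⟩] := by
    rcases eq_nil_or_concat' (redList w).tail with ht | ⟨M, z, hz⟩
    · have := congrArg length (eq_cons_of_mem_head? hy)
      rw [ht] at this
      exact absurd h2 (by simp [len, this])
    · rw [eq_cons_of_mem_head? hy, hz] at hx ⊢
      rw [← cons_append, getLast?_concat, Option.mem_some_iff] at hx
      exact ⟨M, by rw [hx, cons_append]⟩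
  have hconj :
      (CoprodI.of x)⁻¹⁻¹ * w * (CoprodI.of x)⁻¹ = listProd (⟨i, x * y⟩ :: M) := by
    conv_lhs => rw [← listProd_redList w, hM]
    simp [mul_assoc]
  have hlen := (cyclicLength_le w (CoprodI.of x)⁻¹).trans (hconj ▸ len_listProd_le _)
  rw [← hw.2, len, hM] at hlen
  simp only [cons_append, length_cons, length_append, length_nil] at hlen
  omega

theorem exists_root_of_radicalLength (w : CoprodI G) :
    ∃ h k, 0 < k ∧ w = h ^ k ∧ radicalLength w = cyclicLength h := by
  obtain ⟨h, k, hk, hw, hr⟩ := Nat.sInf_mem (s := {n | ∃ (h : CoprodI G) (k : ℕ), 0 < k ∧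
    w = h ^ k ∧ n = cyclicLength h}) ⟨_, w, 1, one_pos, (pow_one w).symm, rfl⟩
  exact ⟨h, k, hk, hw, hr⟩

theorem radicalLength_le {w h : CoprodI G} {k : ℕ} (hk : 0 < k) (hw : w = h ^ k) :
    radicalLength w ≤ cyclicLength h :=
  Nat.sInf_le ⟨h, k, hk, hw, rfl⟩

theorem len_pow_le_one {x : CoprodI G} (hx : len x ≤ 1) (k : ℕ) : len (x ^ k) ≤ 1 := by
  rcases hr : redList x with _ | ⟨⟨i, y⟩, _ | ⟨_, _⟩⟩
  · simp [redList_eq_nil_iff.mp hr, len]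
  · rw [← listProd_redList x, hr, listProd_cons, listProd_nil, mul_one, ← map_pow]
    simpa using len_listProd_le [⟨i, y ^ k⟩]
  · simp [len, hr] at hx

theorem exists_conj_eq_pow_radicalLength {w : CoprodI G} (hc : 2 ≤ cyclicLength w) :
    ∃ g h k, 0 < k ∧ g⁻¹ * w * g = h ^ k ∧ len h = radicalLength w ∧
      IsCyclicallyReduced h ∧ 2 ≤ len h := by
  obtain ⟨h, k, hk, hwk, hr⟩ := exists_root_of_radicalLength w
  obtain ⟨g, hg⟩ := exists_len_eq_cyclicLength h
  have hconj : g⁻¹ * w * g = (g⁻¹ * h * g) ^ k := by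
    simpa [hwk] using (conj_pow (a := g⁻¹) (b := h) (i := k)).symm
  have h2 : 2 ≤ len (g⁻¹ * h * g) := by
    by_contra! h1
    have := (cyclicLength_le w g).trans (hconj ▸ len_pow_le_one (Nat.le_of_lt_succ h1) k)
    omega
  refine ⟨g, _, k, hk, hconj, by rw [hg, hr], ⟨?_, by rw [hg, cyclicLength_conj]⟩, h2⟩
  rintro h1
  simp [h1, len] at h2

theorem exists_infix_of_conj_eq_pow {w h g : CoprodI G} {k : ℕ} (hw₁ : w ≠ 1)
    (hw : IsCyclicallyReducedWord (redList w)) (hh : IsCyclicallyReducedWord (redList h))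
    (hconj : g⁻¹ * w * g = h ^ k) :
    ∃ F : List (Σ i, G i), ∃ a b : ℕ, F <:+: (replicate a (redList w)).flatten ∧
      F <:+: (replicate b (redList h)).flatten ∧ len w + len h ≤ F.length := by
  obtain ⟨N, hN⟩ : ∃ N, N = len h + len g⁻¹ + len g + 1 := ⟨_, rfl⟩
  obtain ⟨F, hFh, hFw, hFlen⟩ := exists_infix_redList_mul_mul g⁻¹ (w ^ N) g
  have hconjN : g⁻¹ * w ^ N * g = h ^ (k * N) := by
    rw [pow_mul, ← hconj]
    simpa using (conj_pow (a := g⁻¹) (b := w) (i := N)).symm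
  rw [hconjN, redList_pow hh] at hFh
  rw [redList_pow hw] at hFw
  have hlenN : len (w ^ N) = N * len w := by simp [len, redList_pow hw]
  have hw0 : 1 ≤ len w := Nat.one_le_iff_ne_zero.mpr fun h0 =>
    hw₁ (redList_eq_nil_iff.mp (length_eq_zero_iff.mp h0))
  have hmul : N + len w ≤ N * len w + 1 := by nlinarith
  exact ⟨F, N, k * N, hFw, hFh, by omega⟩

theorem radicalLength_le_length {w g h : CoprodI G} {k m : ℕ} {C : List (Σ i, G i)}
    (hk : 0 < k) (hm : 0 < m) (hconj : g⁻¹ * w * g = h ^ k)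
    (hC : redList h = (replicate m C).flatten) : radicalLength w ≤ C.length := by
  have hw : w = (g * listProd C * g⁻¹) ^ (m * k) := by
    rw [pow_mul, conj_pow, conj_pow, ← listProd_flatten_replicate, ← hC, listProd_redList,
      ← hconj]
    group
  calc radicalLength w ≤ cyclicLength (g * listProd C * g⁻¹) :=
        radicalLength_le (Nat.mul_pos hm hk) hw
    _ ≤ len (listProd C) := by simpa [mul_assoc] using cyclicLength_le (g * listProd C * g⁻¹) g
    _ ≤ C.length := len_listProd_le C

theorem exists_redList_eq_flatten_replicate_radicalLength {w : CoprodI G}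
    (hw : IsCyclicallyReduced w) (hc : 2 ≤ cyclicLength w) :
    ∃ D, D.length = radicalLength w ∧
      redList w = (replicate (len w / radicalLength w) D).flatten := by
  obtain ⟨g, h, k, hk, hconj, hr, hh, hh2⟩ := exists_conj_eq_pow_radicalLength hc
  have hw2 : 2 ≤ len w := hw.2 ▸ hc
  have hne : ∀ {x : CoprodI G}, 2 ≤ len x → redList x ≠ [] := fun h2 h0 => by
    simp [len, h0] at h2
  obtain ⟨F, a, b, hFw, hFh, hF⟩ := exists_infix_of_conj_eq_pow hw.1
    (hw.isCyclicallyReducedWord hw2) (hh.isCyclicallyReducedWord hh2) hconj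
  obtain ⟨C₁, C₂, hC, hwC, hhC⟩ :=
    exists_eq_flatten_replicate_of_infix (hne hw2) (hne hh2) hFw hFh (by unfold len at hF; omega)
  change (C₁ ++ C₂).length = (len w).gcd (len h) at hC
  change redList w = (replicate (len w / (len w).gcd (len h)) (C₁ ++ C₂)).flatten at hwC
  change redList h = (replicate (len h / (len w).gcd (len h)) (C₂ ++ C₁)).flatten at hhC
  have hgcd : (len w).gcd (len h) ≤ len h := Nat.gcd_le_right _ (by omega)
  have hle := radicalLength_le_length hk
    (Nat.div_pos hgcd (Nat.gcd_pos_of_pos_right _ (by omega))) hconj hhC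
  have hgcd_eq : (len w).gcd (len h) = len h := by
    rw [length_append, add_comm, ← length_append, hC] at hle
    omega
  exact ⟨C₁ ++ C₂, by rw [hC, hgcd_eq, hr], by rwa [hgcd_eq, hr] at hwC⟩

theorem IsSubword.infix_flatten_replicate {U w : CoprodI G} {k : ℕ} (hU : IsSubword U (w ^ k))
    (hw : IsCyclicallyReducedWord (redList w)) :
    redList U <:+: (replicate k (redList w)).flatten := by
  obtain ⟨l₁, l₂, h⟩ := hU
  exact ⟨l₁, l₂, by rw [← redList_pow hw, h]⟩

theorem pos_of_redList_eq_flatten_replicate {w : CoprodI G} {m : ℕ} {L : List (Σ i, G i)}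
    (hw : w ≠ 1) (h : redList w = (replicate m L).flatten) : 0 < m :=
  Nat.pos_of_ne_zero fun hm => hw (redList_eq_nil_iff.mp (by simp [h, hm]))

theorem ne_nil_of_redList_eq_flatten_replicate {w : CoprodI G} {m : ℕ}
    {L : List (Σ i, G i)} (hw : w ≠ 1) (h : redList w = (replicate m L).flatten) : L ≠ [] := by
  rintro rfl
  exact hw (redList_eq_nil_iff.mp (by simpa using h))

theorem redList_listProd_of_infix {w : CoprodI G} {L : List (Σ i, G i)} (h : L <:+: redList w) :
    redList (listProd L) = L :=
  redList_listProd ((isReducedWord_redList w).infix h)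

theorem fine_wilf_free_products_general
    {ι : Type*} {G : ι → Type*} [∀ i, Group (G i)]
    (w₁ w₂ : Monoid.CoprodI G)
    (hw₁ : IsCyclicallyReduced w₁) (hw₂ : IsCyclicallyReduced w₂)
    (hc₁ : 2 ≤ cyclicLength w₁) (hc₂ : 2 ≤ cyclicLength w₂)
    (U : Monoid.CoprodI G) (k₁ k₂ : ℕ)
    (hU₁ : IsSubword U (w₁ ^ k₁)) (hU₂ : IsSubword U (w₂ ^ k₂))
    (hlen : radicalLength w₁ + radicalLength w₂ -
        Nat.gcd (radicalLength w₁) (radicalLength w₂) ≤ len U) :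
    ∃ (C₁ C₂ : Monoid.CoprodI G) (m₁ m₂ : ℕ), 0 < m₁ ∧ 0 < m₂ ∧
      redList w₁ = (List.replicate m₁ (redList C₁ ++ redList C₂)).flatten ∧
      redList w₂ = (List.replicate m₂ (redList C₂ ++ redList C₁)).flatten := by
  obtain ⟨D₁, hD₁, hw₁D⟩ := exists_redList_eq_flatten_replicate_radicalLength hw₁ hc₁
  obtain ⟨D₂, hD₂, hw₂D⟩ := exists_redList_eq_flatten_replicate_radicalLength hw₂ hc₂
  have hU₁D := hU₁.infix_flatten_replicate (hw₁.isCyclicallyReducedWord (hw₁.2 ▸ hc₁))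
  have hU₂D := hU₂.infix_flatten_replicate (hw₂.isCyclicallyReducedWord (hw₂.2 ▸ hc₂))
  rw [hw₁D, flatten_replicate_flatten_replicate] at hU₁D
  rw [hw₂D, flatten_replicate_flatten_replicate] at hU₂D
  obtain ⟨C₁, C₂, -, hD₁C, hD₂C⟩ := exists_eq_flatten_replicate_of_infix
    (ne_nil_of_redList_eq_flatten_replicate hw₁.1 hw₁D)
    (ne_nil_of_redList_eq_flatten_replicate hw₂.1 hw₂D) hU₁D hU₂D (by rwa [hD₁, hD₂])
  rw [hD₁C, flatten_replicate_flatten_replicate] at hw₁D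
  rw [hD₂C, flatten_replicate_flatten_replicate] at hw₂D
  have hm₁ := pos_of_redList_eq_flatten_replicate hw₁.1 hw₁D
  have hm₂ := pos_of_redList_eq_flatten_replicate hw₂.1 hw₂D
  have hC₁₂ : C₁ ++ C₂ <:+: redList w₁ :=
    hw₁D ▸ infix_of_mem_flatten (mem_replicate.mpr ⟨hm₁.ne', rfl⟩)
  refine ⟨listProd C₁, listProd C₂, _, _, hm₁, hm₂, ?_, ?_⟩ <;>
    rwa [redList_listProd_of_infix ((prefix_append C₁ C₂).isInfix.trans hC₁₂),
      redList_listProd_of_infix ((suffix_append C₁ C₂).isInfix.trans hC₁₂)]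

/-- **Fine–Wilf theorem for free products.** If `w₁, w₂` are cyclically reduced
with `|w₁|_c, |w₂|_c ≥ 2` and a word `U` is a subword of both `w₁^{k₁}` and
`w₂^{k₂}` with `|U| ≥ |w₁|_r + |w₂|_r − gcd(|w₁|_r, |w₂|_r)`, then there are
reduced words `C₁, C₂` with `w₁ ≡ (C₁ ⬝ C₂)^{m₁}` and `w₂ ≡ (C₂ ⬝ C₁)^{m₂}`
for some positive `m₁, m₂`. -/
theorem fine_wilf_free_products
    {ι : Type*} [Nontrivial ι] {G : ι → Type*} [∀ i, Group (G i)]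
    (hG : ∀ i, Nontrivial (G i))
    (w₁ w₂ : Monoid.CoprodI G)
    (hw₁ : IsCyclicallyReduced w₁) (hw₂ : IsCyclicallyReduced w₂)
    (hc₁ : 2 ≤ cyclicLength w₁) (hc₂ : 2 ≤ cyclicLength w₂)
    (U : Monoid.CoprodI G) (k₁ k₂ : ℕ) (hk₁ : 0 < k₁) (hk₂ : 0 < k₂)
    (hU₁ : IsSubword U (w₁ ^ k₁)) (hU₂ : IsSubword U (w₂ ^ k₂))
    (hlen : radicalLength w₁ + radicalLength w₂ -
        Nat.gcd (radicalLength w₁) (radicalLength w₂) ≤ len U) :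
    ∃ (C₁ C₂ : Monoid.CoprodI G) (m₁ m₂ : ℕ), 0 < m₁ ∧ 0 < m₂ ∧
      redList w₁ = (List.replicate m₁ (redList C₁ ++ redList C₂)).flatten ∧
      redList w₂ = (List.replicate m₂ (redList C₂ ++ redList C₁)).flatten :=
  fine_wilf_free_products_general w₁ w₂ hw₁ hw₂ hc₁ hc₂ U k₁ k₂ hU₁ hU₂ hlen

end FreeProdPaper
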